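/- arXiv:2102.04698 — 9 statements merged into one kernel-verified Lean document; each statement's English description precedes it below -/
import Mathlib

section
/- Let A be a unital *-algebra over ℂ and let h be an invertible hermitian form on a right A-module M. Then h⁻¹, defined by h⁻¹(ω₁,ω₂) = ω₁(ĥ⁻¹(ω₂)), is a hermitian form on the left A-module M*; that is, h⁻¹ is additive in its first argument, h⁻¹(a·ω₁, ω₂) = a·h⁻¹(ω₁,ω₂), and h⁻¹(ω₁,ω₂)* = h⁻¹(ω₂,ω₁) for all ω₁,ω₂ ∈ M* and a ∈ A. -/
open MulOpposite

/-- A hermitian form on a right `A`-module `M`: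
`h(m₁,m₂)* = h(m₂,m₁)`, `h(m₁, m₂·a) = h(m₁,m₂)·a`, and additivity in the first
(hence, by the star symmetry, also the second) argument. -/
def IsHermitianForm {A M : Type*} [Ring A] [StarRing A] [AddCommGroup M]
    [Module Aᵐᵒᵖ M] (h : M → M → A) : Prop :=
  (∀ m₁ m₂, star (h m₁ m₂) = h m₂ m₁) ∧
  (∀ m₁ m₂ (a : A), h m₁ (op a • m₂) = h m₁ m₂ * a) ∧
  (∀ m₁ m₂ m, h (m₁ + m₂) m = h m₁ m + h m₂ m)

/-- An element of the dual module `M* = Hom_A(M,A)` of the right `A`-module `M`,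
regarded as a function `M → A` which is additive and right `A`-linear. -/
def IsDualElem {A M : Type*} [Ring A] [AddCommGroup M] [Module Aᵐᵒᵖ M]
    (ω : M → A) : Prop :=
  (∀ m₁ m₂, ω (m₁ + m₂) = ω m₁ + ω m₂) ∧ (∀ (a : A) m, ω (op a • m) = ω m * a)

/-- A hermitian form `h` is invertible if `ĥ : M → M*`, `ĥ(m₁)(m₂) = h(m₁,m₂)`,
is a bijection onto the dual module. -/
def IsInvertibleForm {A M : Type*} [Ring A] [StarRing A] [AddCommGroup M]
    [Module Aᵐᵒᵖ M] (h : M → M → A) : Prop :=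
  (∀ m₁ m₂, (∀ x, h m₁ x = h m₂ x) → m₁ = m₂) ∧
  (∀ ω : M → A, IsDualElem ω → ∃ m, ∀ x, h m x = ω x)

/-- If `h` is an invertible hermitian form on a right `A`-module `M`
(with `g = ĥ⁻¹` a two-sided inverse of `ĥ` on dual elements), then
`h⁻¹(ω₁,ω₂) = ω₁(ĥ⁻¹(ω₂))` is a hermitian form on the left `A`-module `M*`:
it is additive in its first argument, satisfies `h⁻¹(a·ω₁,ω₂) = a·h⁻¹(ω₁,ω₂)`,
and `h⁻¹(ω₁,ω₂)* = h⁻¹(ω₂,ω₁)`. -/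
theorem inverse_form_is_hermitian
    {A M : Type*} [Ring A] [StarRing A] [Algebra ℂ A] [StarModule ℂ A]
    [AddCommGroup M] [Module Aᵐᵒᵖ M]
    (h : M → M → A)
    (hherm : IsHermitianForm h) (hinv : IsInvertibleForm h)
    (g : (M → A) → M)
    (hg1 : ∀ ω : M → A, IsDualElem ω → ∀ x, h (g ω) x = ω x)
    (hg2 : ∀ m : M, g (fun x => h m x) = m) :
    (∀ ω₁ ω₂ η : M → A, IsDualElem ω₁ → IsDualElem ω₂ → IsDualElem η →
      (fun x => ω₁ x + ω₂ x) (g η) = ω₁ (g η) + ω₂ (g η)) ∧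
    (∀ (a : A) (ω₁ ω₂ : M → A), IsDualElem ω₁ → IsDualElem ω₂ →
      (fun x => a * ω₁ x) (g ω₂) = a * ω₁ (g ω₂)) ∧
    (∀ ω₁ ω₂ : M → A, IsDualElem ω₁ → IsDualElem ω₂ →
      star (ω₁ (g ω₂)) = ω₂ (g ω₁)) := by
  refine ⟨fun _ _ _ _ _ _ => rfl, fun _ _ _ _ _ => rfl, fun ω₁ ω₂ h₁ h₂ => ?_⟩
  rw [← hg1 ω₁ h₁ (g ω₂), hherm.1, hg1 ω₂ h₂]
end

section
/- Let A be a unital *-algebra over ℂ and let (M,h) be a right hermitian A-module generated by elements e₁,…,eₙ, and set h_{ab} = h(e_a,e_b). Then (M,h) is a regular hermitian module (i.e. M is finitely generated projective and h is invertible) if and only if there exist elements h^{ab} ∈ A (a,b = 1,…,n) such that (h^{ab})* = h^{ba} and Σ_{r,s} e_r·h^{rs}·h_{sc} = e_c for all c = 1,…,n. -/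
open MulOpposite

lemma op_sum' {A : Type*} [Ring A] {n : ℕ} (f : Fin n → A) :
    op (∑ i, f i) = ∑ i, op (f i) :=
  map_sum (opAddEquiv : A ≃+ Aᵐᵒᵖ).toAddMonoidHom f Finset.univ

/-- Let `(M,h)` be a right hermitian `A`-module generated by
`e₁,…,eₙ`.  Then `(M,h)` is a regular hermitian module (i.e. `M` is finitely
generated projective and `h` is invertible) if and only if there exist
`h^{ab} ∈ A` with `(h^{ab})* = h^{ba}` and `Σ_{r,s} e_r·h^{rs}·h_{sc} = e_c`. -/
theorem regular_iff_exists_pseudo_inverse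
    {A M : Type*} [Ring A] [StarRing A] [Algebra ℂ A] [StarModule ℂ A]
    [AddCommGroup M] [Module Aᵐᵒᵖ M]
    (n : ℕ) (e : Fin n → M)
    (hgen : Submodule.span Aᵐᵒᵖ (Set.range e) = ⊤)
    (h : M → M → A) (hherm : IsHermitianForm h) :
    (Module.Finite Aᵐᵒᵖ M ∧ Module.Projective Aᵐᵒᵖ M ∧ IsInvertibleForm h) ↔
      ∃ hu : Fin n → Fin n → A,
        (∀ a b, star (hu a b) = hu b a) ∧
        ∀ c, (∑ r, ∑ s, op (hu r s * h (e s) (e c)) • e r) = e c := by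
  obtain ⟨hstar, hsmul, haddl⟩ := hherm
  -- derived facts about h
  have hzero1 : ∀ x, h 0 x = 0 := by
    intro x
    have t := haddl 0 0 x
    rw [add_zero] at t
    exact (left_eq_add.mp t)
  have haddr : ∀ m x y, h m (x + y) = h m x + h m y := by
    intro m x y
    rw [← hstar (x + y) m, haddl, star_add, hstar, hstar]
  have hsmull : ∀ (a : A) (m x : M), h (op a • m) x = star a * h m x := by
    intro a m x
    rw [← hstar x (op a • m), hsmul, star_mul, hstar]
  -- h of a finite sum in the first argument
  have hsuml : ∀ {k : ℕ} (f : Fin k → M) (x : M),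
      h (∑ i, f i) x = ∑ i, h (f i) x := by
    intro k f x
    exact map_sum (⟨⟨fun m => h m x, hzero1 x⟩, fun a b => haddl a b x⟩ : M →+ A)
      f Finset.univ
  -- the canonical surjection from the free module
  set π : (Fin n → Aᵐᵒᵖ) →ₗ[Aᵐᵒᵖ] M :=
    { toFun := fun f => ∑ r, f r • e r
      map_add' := fun f g => by
        simp [add_smul, Finset.sum_add_distrib]
      map_smul' := fun a f => by
        simp [Finset.smul_sum, smul_smul] } with hπdef
  have hπ : ∀ f, π f = ∑ r, f r • e r := fun f => rfl
  have hπe : ∀ r, π (Pi.single r (1 : Aᵐᵒᵖ)) = e r := by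
    intro r
    rw [hπ]
    simp [Pi.single_apply, ite_smul]
  have hπsurj : Function.Surjective π := by
    rw [← LinearMap.range_eq_top, ← top_le_iff, ← hgen, Submodule.span_le]
    rintro _ ⟨r, rfl⟩
    exact ⟨Pi.single r 1, hπe r⟩
  -- extension principle for "dual-like" maps
  have extl : ∀ (f g : M → A),
      (∀ x y, f (x + y) = f x + f y) → (∀ (a : A) x, f (op a • x) = f x * a) →
      (∀ x y, g (x + y) = g x + g y) → (∀ (a : A) x, g (op a • x) = g x * a) →
      (∀ c, f (e c) = g (e c)) → ∀ m, f m = g m := by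
    intro f g fadd fsm gadd gsm hfg m
    have f0 : f 0 = 0 := by
      have := fsm 0 0
      simpa using this
    have g0 : g 0 = 0 := by
      have := gsm 0 0
      simpa using this
    have hm : m ∈ Submodule.span Aᵐᵒᵖ (Set.range e) := by
      rw [hgen]; exact Submodule.mem_top
    induction hm using Submodule.span_induction with
    | mem x hx => obtain ⟨c, rfl⟩ := hx; exact hfg c
    | zero => rw [f0, g0]
    | add x y _ _ ihx ihy => rw [fadd, gadd, ihx, ihy]
    | smul a x _ ih =>
        rw [← op_unop a, fsm, gsm, ih]
  constructor
  · rintro ⟨hfin, hproj, hinj, hsurj⟩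
    obtain ⟨σ, hσ⟩ := Module.projective_lifting_property π LinearMap.id hπsurj
    have hrec : ∀ m, π (σ m) = m := fun m => LinearMap.congr_fun hσ m
    have hdual : ∀ r : Fin n, IsDualElem (fun x => unop (σ x r)) := by
      intro r
      constructor
      · intro x y
        show unop (σ (x + y) r) = unop (σ x r) + unop (σ y r)
        rw [map_add]
        rfl
      · intro a x
        show unop (σ (op a • x) r) = unop (σ x r) * a
        rw [map_smul]
        simp
    choose m hm using fun r => hsurj _ (hdual r)
    have key : ∀ r c, h (m r) (e c) = ∑ s, h (m r) (m s) * h (e s) (e c) := by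
      intro r c
      have expand : π (σ (m r)) = ∑ s, op (h (m s) (m r)) • e s := by
        rw [hπ]
        refine Finset.sum_congr rfl fun s _ => ?_
        rw [hm s (m r), op_unop]
      calc h (m r) (e c) = h (∑ s, op (h (m s) (m r)) • e s) (e c) := by
            rw [← expand, hrec]
        _ = ∑ s, h (op (h (m s) (m r)) • e s) (e c) := hsuml _ _
        _ = ∑ s, h (m r) (m s) * h (e s) (e c) := by
            refine Finset.sum_congr rfl fun s _ => ?_
            rw [hsmull, hstar]
    refine ⟨fun r s => h (m r) (m s), fun a b => hstar _ _, fun c => ?_⟩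
    calc (∑ r, ∑ s, op (h (m r) (m s) * h (e s) (e c)) • e r)
        = ∑ r, op (h (m r) (e c)) • e r := by
          refine Finset.sum_congr rfl fun r _ => ?_
          rw [key r c, op_sum', Finset.sum_smul]
      _ = π (σ (e c)) := by
          rw [hπ]
          refine Finset.sum_congr rfl fun r _ => ?_
          rw [hm r (e c), op_unop]
      _ = e c := hrec _
  · rintro ⟨hu, hustar, hue⟩
    set σ : M →ₗ[Aᵐᵒᵖ] (Fin n → Aᵐᵒᵖ) :=
      { toFun := fun x r => op (∑ s, hu r s * h (e s) x)
        map_add' := fun x y => by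
          funext r
          simp [haddr, mul_add, Finset.sum_add_distrib]
        map_smul' := fun a x => by
          funext r
          simp only [RingHom.id_apply, Pi.smul_apply, smul_eq_mul]
          conv_lhs => rw [← op_unop a]
          conv_rhs => rw [← op_unop a]
          rw [← op_mul]
          congr 1
          rw [Finset.sum_mul]
          refine Finset.sum_congr rfl fun s _ => ?_
          rw [hsmul, mul_assoc] } with hσdef
    have hσ : ∀ x r, σ x r = op (∑ s, hu r s * h (e s) x) := fun x r => rfl
    have hσe : ∀ c, π (σ (e c)) = e c := by
      intro c
      rw [hπ]
      calc (∑ r, σ (e c) r • e r)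
          = ∑ r, ∑ s, op (hu r s * h (e s) (e c)) • e r := by
            refine Finset.sum_congr rfl fun r _ => ?_
            rw [hσ, op_sum', Finset.sum_smul]
        _ = e c := hue c
    have hrec : ∀ x, π (σ x) = x := by
      have : π ∘ₗ σ = LinearMap.id := by
        apply LinearMap.ext_on hgen
        rintro _ ⟨c, rfl⟩
        exact hσe c
      exact fun x => LinearMap.congr_fun this x
    refine ⟨Module.Finite.of_surjective π hπsurj,
      Module.Projective.of_split σ π (LinearMap.ext hrec), ?_, ?_⟩
    · -- injectivity
      intro m₁ m₂ hx
      have : σ m₁ = σ m₂ := by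
        funext r
        rw [hσ, hσ]
        congr 1
        refine Finset.sum_congr rfl fun s _ => ?_
        congr 1
        rw [← hstar m₁ (e s), hx, hstar]
      rw [← hrec m₁, this, hrec m₂]
    · -- surjectivity onto the dual
      rintro ω ⟨ωadd, ωsm⟩
      have ω0 : ω 0 = 0 := by
        have := ωsm 0 0
        simpa using this
      have ωsum : ∀ {k : ℕ} (f : Fin k → M), ω (∑ i, f i) = ∑ i, ω (f i) :=
        fun f => map_sum (⟨⟨ω, ω0⟩, ωadd⟩ : M →+ A) f Finset.univ
      refine ⟨∑ s, op (star (∑ r, ω (e r) * hu r s)) • e s, ?_⟩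
      refine extl _ _ (fun x y => haddr _ x y) (fun a x => hsmul _ x a) ωadd ωsm ?_
      intro c
      calc h (∑ s, op (star (∑ r, ω (e r) * hu r s)) • e s) (e c)
          = ∑ s, star (star (∑ r, ω (e r) * hu r s)) * h (e s) (e c) := by
            rw [hsuml]
            exact Finset.sum_congr rfl fun s _ => by rw [hsmull]
        _ = ∑ s, ∑ r, ω (e r) * (hu r s * h (e s) (e c)) := by
            refine Finset.sum_congr rfl fun s _ => ?_
            rw [star_star, Finset.sum_mul]
            exact Finset.sum_congr rfl fun r _ => by rw [mul_assoc]
        _ = ∑ r, ∑ s, ω (e r) * (hu r s * h (e s) (e c)) := Finset.sum_comm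
        _ = ω (e c) := by
            conv_rhs => rw [← hue c, ωsum]
            refine Finset.sum_congr rfl fun r _ => ?_
            rw [ωsum]
            exact Finset.sum_congr rfl fun s _ => by rw [ωsm]
end

section
/- Let A be a unital *-algebra over ℂ and let (M,h) be a right hermitian A-module generated by elements e₁,…,eₙ, and set h_{ab} = h(e_a,e_b). Then (M,h) is a regular hermitian module and {e₁,…,eₙ} is a basis of M (i.e. the e_a are A-linearly independent generators) if and only if there exist elements h^{ab} ∈ A (a,b = 1,…,n) such that (h^{ab})* = h^{ba} and Σ_p h^{ap}·h_{pc} = δ^a_c·1 for all a,c = 1,…,n. -/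
open MulOpposite

/-- Let `(M,h)` be a right hermitian `A`-module generated by
`e₁,…,eₙ`.  Then `(M,h)` is a regular hermitian module and `{e₁,…,eₙ}` is a basis
of `M` (`A`-linearly independent generators) if and only if there exist
`h^{ab} ∈ A` with `(h^{ab})* = h^{ba}` and `Σ_p h^{ap}·h_{pc} = δ^a_c·1`. -/
theorem regular_and_basis_iff_exists_inverse
    {A M : Type*} [Ring A] [StarRing A] [Algebra ℂ A] [StarModule ℂ A]
    [AddCommGroup M] [Module Aᵐᵒᵖ M]
    (n : ℕ) (e : Fin n → M)
    (hgen : Submodule.span Aᵐᵒᵖ (Set.range e) = ⊤)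
    (h : M → M → A) (hherm : IsHermitianForm h) :
    ((Module.Finite Aᵐᵒᵖ M ∧ Module.Projective Aᵐᵒᵖ M ∧ IsInvertibleForm h) ∧
      (∀ coef : Fin n → A, (∑ a, op (coef a) • e a) = 0 → ∀ a, coef a = 0)) ↔
      ∃ hu : Fin n → Fin n → A,
        (∀ a b, star (hu a b) = hu b a) ∧
        ∀ a c, (∑ p, hu a p * h (e p) (e c)) = if a = c then (1 : A) else 0 := by
  obtain ⟨hstar, hsmul, hadd⟩ := hherm
  have hzero1 : ∀ x : M, h 0 x = 0 := by
    intro x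
    have h1 := hadd 0 0 x
    rw [add_zero] at h1
    exact (left_eq_add.mp h1)
  have hadd2 : ∀ x y z : M, h x (y + z) = h x y + h x z := by
    intro x y z
    have h1 : star (h x (y + z)) = star (h x y + h x z) := by
      rw [star_add, hstar, hstar, hstar, hadd]
    simpa using congrArg star h1
  have hzero2 : ∀ x : M, h x 0 = 0 := by
    intro x
    have h1 := hadd2 x 0 0
    rw [add_zero] at h1
    exact (left_eq_add.mp h1)
  have hneg1 : ∀ x y : M, h (-x) y = - h x y := by
    intro x y
    have h1 := hadd (-x) x y
    rw [neg_add_cancel, hzero1] at h1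
    exact eq_neg_of_add_eq_zero_left h1.symm
  have hsmul1 : ∀ (a : A) (x y : M), h (op a • x) y = star a * h x y := by
    intro a x y
    have h1 : star (h (op a • x) y) = h y x * a := by rw [hstar, hsmul]
    have h2 : star (star a * h x y) = h y x * a := by rw [star_mul, star_star, hstar]
    simpa using congrArg star (h1.trans h2.symm)
  have hsum1 : ∀ (f : Fin n → M) (y : M), h (∑ i, f i) y = ∑ i, h (f i) y := fun f y =>
    map_sum (AddMonoidHom.mk' (fun x => h x y) (fun a b => hadd a b y)) f Finset.univ
  have hsum2 : ∀ (x : M) (f : Fin n → M), h x (∑ i, f i) = ∑ i, h x (f i) := fun x f =>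
    map_sum (AddMonoidHom.mk' (h x) (hadd2 x)) f Finset.univ
  have hrep : ∀ x : M, ∃ c : Fin n → A, ∑ q, op (c q) • e q = x := by
    intro x
    have hx : x ∈ Submodule.span Aᵐᵒᵖ (Set.range e) := hgen ▸ Submodule.mem_top
    obtain ⟨c, hc⟩ := (Submodule.mem_span_range_iff_exists_fun Aᵐᵒᵖ).mp hx
    exact ⟨fun q => unop (c q), by simpa using hc⟩
  constructor
  · rintro ⟨⟨-, -, hinj, hsurj⟩, hindep⟩
    have hli : LinearIndependent Aᵐᵒᵖ e := by
      rw [Fintype.linearIndependent_iff]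
      intro g hg i
      have h0 := hindep (fun a => unop (g a)) (by simpa using hg) i
      exact (unop_eq_zero_iff (g i)).mp h0
    let b : Module.Basis (Fin n) Aᵐᵒᵖ M := Module.Basis.mk hli hgen.ge
    have hb : ∀ i, b i = e i := fun i => Module.Basis.mk_apply hli hgen.ge i
    set ε : Fin n → M → A := fun a x => unop (b.repr x a) with hε
    have hεdual : ∀ a, IsDualElem (ε a) := by
      intro a
      refine ⟨fun x y => by simp [hε], fun c x => ?_⟩
      show unop (b.repr (op c • x) a) = unop (b.repr x a) * c
      rw [map_smul, Finsupp.smul_apply, smul_eq_mul, unop_mul, unop_op]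
    choose m hm using fun a => hsurj (ε a) (hεdual a)
    refine ⟨fun a b' => h (m a) (m b'), fun a b' => hstar _ _, ?_⟩
    intro a c
    have hEc : ∑ p, op (h (e p) (e c)) • m p = e c := by
      apply hinj
      intro x
      have hx : ∑ q, op (ε q x) • e q = x := by
        have h1 := b.sum_repr x
        simpa [hb, hε] using h1
      rw [hsum1]
      conv_rhs => rw [← hx, hsum2]
      refine Finset.sum_congr rfl fun p _ => ?_
      rw [hsmul1, hm, hsmul, hstar]
    calc ∑ p, h (m a) (m p) * h (e p) (e c)
        = h (m a) (∑ p, op (h (e p) (e c)) • m p) := by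
          rw [hsum2]; exact Finset.sum_congr rfl fun p _ => (hsmul _ _ _).symm
      _ = ε a (e c) := by rw [hEc, hm]
      _ = if a = c then 1 else 0 := by
          rw [hε]
          simp only [← hb c, b.repr_self, Finsupp.single_apply]
          rcases eq_or_ne a c with rfl | hac
          · simp
          · simp [hac, Ne.symm hac]
  · rintro ⟨hu, hustar, husum⟩
    have key : ∀ c : Fin n → A, (∀ p, ∑ q, h (e p) (e q) * c q = 0) → ∀ a, c a = 0 := by
      intro c hc a
      have h1 : c a = ∑ q, (if a = q then (1:A) else 0) * c q := by simp
      rw [h1]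
      calc ∑ q, (if a = q then (1:A) else 0) * c q
          = ∑ q, (∑ p, hu a p * h (e p) (e q)) * c q :=
            Finset.sum_congr rfl fun q _ => by rw [husum]
        _ = ∑ p, hu a p * ∑ q, h (e p) (e q) * c q := by
            simp_rw [Finset.sum_mul, Finset.mul_sum, mul_assoc]
            exact Finset.sum_comm
        _ = 0 := by simp [hc]
    have hindep : ∀ coef : Fin n → A, (∑ a, op (coef a) • e a) = 0 → ∀ a, coef a = 0 := by
      intro coef hcoef
      apply key
      intro p
      have h1 : h (e p) (∑ q, op (coef q) • e q) = 0 := by rw [hcoef, hzero2]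
      rw [hsum2] at h1
      simpa [hsmul] using h1
    have hli : LinearIndependent Aᵐᵒᵖ e := by
      rw [Fintype.linearIndependent_iff]
      intro g hg i
      have h0 := hindep (fun a => unop (g a)) (by simpa using hg) i
      exact (unop_eq_zero_iff (g i)).mp h0
    refine ⟨⟨?_, ?_, ?_, ?_⟩, hindep⟩
    · exact ⟨⟨(Set.finite_range e).toFinset, by rw [Set.Finite.coe_toFinset]; exact hgen⟩⟩
    · exact Module.Projective.of_basis (Module.Basis.mk hli hgen.ge)
    · intro m₁ m₂ hm12
      obtain ⟨c, hc⟩ := hrep (m₁ - m₂)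
      have hz : ∀ a, c a = 0 := by
        apply key
        intro p
        have h1 : h (m₁ - m₂) (e p) = 0 := by
          rw [sub_eq_add_neg, hadd, hneg1, hm12, add_neg_cancel]
        have h2 := hstar (m₁ - m₂) (e p)
        rw [h1, star_zero] at h2
        rw [← hc, hsum2] at h2
        simpa [hsmul] using h2.symm
      have h3 : m₁ - m₂ = 0 := by rw [← hc]; simp [hz]
      exact sub_eq_zero.mp h3
    · rintro ω ⟨hωadd, hωsmul⟩
      have hω0 : ω 0 = 0 := by
        have h1 := hωadd 0 0
        rw [add_zero] at h1
        exact (left_eq_add.mp h1)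
      refine ⟨∑ p, op (star (∑ a, ω (e a) * hu a p)) • e p, ?_⟩
      set m0 : M := ∑ p, op (star (∑ a, ω (e a) * hu a p)) • e p with hm0
      have hbase : ∀ c, h m0 (e c) = ω (e c) := by
        intro c
        rw [hm0, hsum1]
        simp_rw [hsmul1, star_star]
        calc ∑ p, (∑ a, ω (e a) * hu a p) * h (e p) (e c)
            = ∑ a, ω (e a) * ∑ p, hu a p * h (e p) (e c) := by
              simp_rw [Finset.sum_mul, Finset.mul_sum, mul_assoc]
              exact Finset.sum_comm
          _ = ω (e c) := by
              simp_rw [husum]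
              simp
      intro x
      have hx : x ∈ Submodule.span Aᵐᵒᵖ (Set.range e) := hgen ▸ Submodule.mem_top
      induction hx using Submodule.span_induction with
      | mem y hy => obtain ⟨c, rfl⟩ := hy; exact hbase c
      | zero => rw [hzero2, hω0]
      | add y z _ _ hy hz => rw [hadd2, hωadd, hy, hz]
      | smul a y _ hy => rw [← op_unop a, hsmul, hωsmul, hy]
end

section
/- Let A be a unital *-algebra over ℂ, let (Aⁿ, h̃) be a free right A-module with an invertible hermitian form h̃, and let p : Aⁿ → Aⁿ be a module endomorphism with p² = p that is orthogonal with respect to h̃, i.e. h̃(p(U),V) = h̃(U,p(V)) for all U,V ∈ Aⁿ. Then (p(Aⁿ), h̃|_{p(Aⁿ)}) is a regular hermitian module; in particular the restriction of h̃ to the image of p is an invertible hermitian form on the finitely generated projective module p(Aⁿ). -/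
open MulOpposite

/-- If `h̃` is an invertible hermitian form on the free right
module `Aⁿ` and `p : Aⁿ → Aⁿ` is an idempotent module endomorphism which is
orthogonal with respect to `h̃`, then `(p(Aⁿ), h̃|_{p(Aⁿ)})` is a regular hermitian
module: `p(Aⁿ)` is finitely generated projective and the restriction of `h̃` is an
invertible hermitian form on it. -/
theorem orthogonal_projection_gives_regular_hermitian_module
    {A : Type*} [Ring A] [StarRing A] [Algebra ℂ A] [StarModule ℂ A] (n : ℕ)
    (h : (Fin n → A) → (Fin n → A) → A)
    (hherm : IsHermitianForm h) (hinv : IsInvertibleForm h)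
    (p : (Fin n → A) →ₗ[Aᵐᵒᵖ] (Fin n → A))
    (hidem : ∀ U, p (p U) = p U)
    (horth : ∀ U V, h (p U) V = h U (p V)) :
    Module.Finite Aᵐᵒᵖ ↥(LinearMap.range p) ∧
    Module.Projective Aᵐᵒᵖ ↥(LinearMap.range p) ∧
    IsHermitianForm (fun x y : ↥(LinearMap.range p) => h x y) ∧
    IsInvertibleForm (fun x y : ↥(LinearMap.range p) => h x y) := by
  have hfix : ∀ x ∈ LinearMap.range p, p x = x := by
    rintro x ⟨u, rfl⟩; exact hidem u
  let e : Aᵐᵒᵖ ≃ₗ[Aᵐᵒᵖ] A :=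
    { toFun := unop, invFun := op, map_add' := fun x y => rfl,
      map_smul' := fun r x => rfl, left_inv := fun x => rfl, right_inv := fun x => rfl }
  haveI : Module.Finite Aᵐᵒᵖ A := Module.Finite.equiv e
  haveI : Module.Free Aᵐᵒᵖ A := Module.Free.of_equiv e
  refine ⟨?_, ?_, ?_, ?_⟩
  · exact Module.Finite.of_surjective p.rangeRestrict p.surjective_rangeRestrict
  · refine Module.Projective.of_split (LinearMap.range p).subtype p.rangeRestrict ?_
    refine LinearMap.ext fun z => Subtype.ext ?_
    show p z = z
    exact hfix z z.2
  · exact ⟨fun m₁ m₂ => hherm.1 _ _,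
      fun m₁ m₂ a => hherm.2.1 (m₁ : Fin n → A) m₂ a,
      fun m₁ m₂ m => hherm.2.2 (m₁ : Fin n → A) m₂ m⟩
  · constructor
    · rintro ⟨x, hx⟩ ⟨y, hy⟩ hxy
      refine Subtype.ext (hinv.1 x y fun w => ?_)
      have h1 : h x w = h x (p w) := by
        conv_lhs => rw [← hfix x hx]
        exact horth x w
      have h2 : h y w = h y (p w) := by
        conv_lhs => rw [← hfix y hy]
        exact horth y w
      rw [h1, h2]
      exact hxy ⟨p w, LinearMap.mem_range_self p w⟩
    · intro ω hω
      set ω' : (Fin n → A) → A := fun w => ω ⟨p w, LinearMap.mem_range_self p w⟩ with hω'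
      have hω'dual : IsDualElem ω' := by
        constructor
        · intro m₁ m₂
          have : (⟨p (m₁ + m₂), LinearMap.mem_range_self p _⟩ : ↥(LinearMap.range p)) =
              ⟨p m₁, LinearMap.mem_range_self p _⟩ + ⟨p m₂, LinearMap.mem_range_self p _⟩ := by
            exact Subtype.ext (map_add p m₁ m₂)
          simp only [hω', this, hω.1]
        · intro a m
          have : (⟨p (op a • m), LinearMap.mem_range_self p _⟩ : ↥(LinearMap.range p)) =
              op a • ⟨p m, LinearMap.mem_range_self p _⟩ := by
            exact Subtype.ext (p.map_smul (op a) m)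
          simp only [hω', this, hω.2]
      obtain ⟨m, hm⟩ := hinv.2 ω' hω'dual
      refine ⟨⟨p m, LinearMap.mem_range_self p m⟩, ?_⟩
      rintro ⟨x, hx⟩
      have : h (p m) x = h m (p x) := horth m x
      show h (p m) x = ω ⟨x, hx⟩
      rw [this, hfix x hx, hm x, hω']
      exact congrArg ω (Subtype.ext (hfix x hx))
end

section
/- Let A be a unital *-algebra over ℂ and let (M,h') be a regular hermitian right A-module generated by n elements. Let B = Aⁿ ⊕ (Aⁿ)*, where (Aⁿ)* is regarded as a right A-module via (ω·a)(U) = a*·ω(U), and define the hermitian form b : B × B → A by b((U,ω),(V,η)) = η(U)* + ω(V). Then b is an invertible hermitian form, and there exists a module endomorphism p̂ : B → B with p̂² = p̂ which is orthogonal with respect to b (i.e. b(p̂(x),y) = b(x,p̂(y)) for all x,y ∈ B), such that (p̂(B), b|_{p̂(B)}) is isometric to (M,h'), i.e. there is a module isomorphism Φ : p̂(B) → M with b(x,y) = h'(Φ(x),Φ(y)) for all x,y ∈ p̂(B). -/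
/-!
Projectivity gives a right-linear section `σ` of the surjection `Aⁿ → M`, `U ↦ Σ eᵢ·Uᵢ`.
Then `ι m = (σ m, ½ h'(m, e_·))` embeds `(M, h')` isometrically into `(B, b)`: the two halves of
`b(ι m, ι m')` are `½ h'(m', m)*` and `½ h'(m, m')`. Invertibility of `h'` provides the
`b`-adjoint `Ψ : B → M` of `ι`, which is a retraction of `ι`; hence `p̂ = ι ∘ Ψ` is an orthogonal
projection of `B` whose image is isometric to `M` via `Ψ`.
-/

open MulOpposite

/-- The right `A`-module `B = Aⁿ ⊕ (Aⁿ)*`, where a dual element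
`ω ∈ (Aⁿ)*` is identified with its coordinates `ω_i = ω(ê_i)` (so that
`ω(U) = Σ_i ω_i·U_i`), and `(Aⁿ)*` carries the right action `(ω·a)(U) = a*·ω(U)`.
The right action of `a ∈ A` on `B` is therefore
`(U,ω)·a = (U·a, star a·ω)` componentwise. -/
def bAct {A : Type*} [Ring A] [StarRing A] {n : ℕ}
    (x : (Fin n → A) × (Fin n → A)) (a : A) : (Fin n → A) × (Fin n → A) :=
  (fun i => x.1 i * a, fun i => star a * x.2 i)

/-- The hermitian form `b((U,ω),(V,η)) = η(U)* + ω(V)` on `B = Aⁿ ⊕ (Aⁿ)*`. -/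
def bForm {A : Type*} [Ring A] [StarRing A] {n : ℕ}
    (x y : (Fin n → A) × (Fin n → A)) : A :=
  star (∑ i, y.2 i * x.1 i) + ∑ i, x.2 i * y.1 i

/-- A dual element of the right module `B = Aⁿ ⊕ (Aⁿ)*`: an additive, right
`A`-linear map `B → A`. -/
def IsDualElemB {A : Type*} [Ring A] [StarRing A] {n : ℕ}
    (χ : (Fin n → A) × (Fin n → A) → A) : Prop :=
  (∀ x y, χ (x + y) = χ x + χ y) ∧ (∀ x a, χ (bAct x a) = χ x * a)

namespace IsHermitianForm

variable {A M : Type*} [Ring A] [StarRing A] [AddCommGroup M] [Module Aᵐᵒᵖ M]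
  {h : M → M → A}

lemma add_right (hh : IsHermitianForm h) (m m₁ m₂ : M) :
    h m (m₁ + m₂) = h m m₁ + h m m₂ := by
  rw [← hh.1, hh.2.2, star_add, hh.1, hh.1]

lemma smul_left (hh : IsHermitianForm h) (a : A) (m₁ m₂ : M) :
    h (op a • m₁) m₂ = star a * h m₁ m₂ := by
  rw [← hh.1, hh.2.1, star_mul, hh.1]

lemma sum_smul_right (hh : IsHermitianForm h) {ι : Type*} [Fintype ι] (m : M) (v : ι → M)
    (c : ι → A) : h m (∑ i, op (c i) • v i) = ∑ i, h m (v i) * c i := by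
  calc h m (∑ i, op (c i) • v i) = ∑ i, h m (op (c i) • v i) :=
        map_sum (AddMonoidHom.mk' (h m) (hh.add_right m)) _ _
    _ = ∑ i, h m (v i) * c i := Finset.sum_congr rfl fun i _ => hh.2.1 m (v i) (c i)

end IsHermitianForm

section bForm

variable {A : Type*} [Ring A] [StarRing A] {n : ℕ}

lemma bForm_star (x y : (Fin n → A) × (Fin n → A)) : star (bForm x y) = bForm y x := by
  simp [bForm, add_comm]

lemma bForm_bAct_right (x y : (Fin n → A) × (Fin n → A)) (a : A) :
    bForm x (bAct y a) = bForm x y * a := by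
  simp [bForm, bAct, Finset.sum_mul, mul_assoc, add_mul, star_sum, star_mul]

lemma bForm_add_left (x₁ x₂ y : (Fin n → A) × (Fin n → A)) :
    bForm (x₁ + x₂) y = bForm x₁ y + bForm x₂ y := by
  simp only [bForm, Prod.fst_add, Prod.snd_add, Pi.add_apply, mul_add, add_mul,
    Finset.sum_add_distrib, star_add]
  abel

lemma bForm_add_right (x y₁ y₂ : (Fin n → A) × (Fin n → A)) :
    bForm x (y₁ + y₂) = bForm x y₁ + bForm x y₂ := by
  rw [← bForm_star (y₁ + y₂), bForm_add_left, star_add, bForm_star, bForm_star]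

lemma bForm_bAct_left (x y : (Fin n → A) × (Fin n → A)) (a : A) :
    bForm (bAct x a) y = star a * bForm x y := by
  rw [← bForm_star, bForm_bAct_right, star_mul, bForm_star]

lemma bForm_single_fst (x : (Fin n → A) × (Fin n → A)) (j : Fin n) :
    bForm x (Pi.single j 1, 0) = x.2 j := by
  simp [bForm, Pi.single_apply]

lemma bForm_single_snd (x : (Fin n → A) × (Fin n → A)) (j : Fin n) :
    bForm x (0, Pi.single j 1) = star (x.1 j) := by
  simp [bForm, Pi.single_apply]

lemma bForm_left_injective {x y : (Fin n → A) × (Fin n → A)}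
    (hxy : ∀ z, bForm x z = bForm y z) : x = y := by
  refine Prod.ext (funext fun j => ?_) (funext fun j => ?_)
  · simpa [bForm_single_snd] using congrArg star (hxy (0, Pi.single j 1))
  · simpa [bForm_single_fst] using hxy (Pi.single j 1, 0)

lemma eq_sum_bAct_single (z : (Fin n → A) × (Fin n → A)) :
    z = ∑ j, bAct (Pi.single j 1, 0) (z.1 j) + ∑ j, bAct (0, Pi.single j 1) (star (z.2 j)) := by
  refine Prod.ext (funext fun i => ?_) (funext fun i => ?_) <;>
    simp [bAct, Pi.single_apply, Finset.sum_apply, Prod.fst_sum, Prod.snd_sum]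

lemma exists_bForm_eq_of_isDualElemB {χ : (Fin n → A) × (Fin n → A) → A}
    (hχ : IsDualElemB χ) : ∃ x, ∀ z, bForm x z = χ z := by
  refine ⟨(fun j => star (χ (0, Pi.single j 1)), fun j => χ (Pi.single j 1, 0)), fun z => ?_⟩
  let χ' : (Fin n → A) × (Fin n → A) →+ A := AddMonoidHom.mk' χ hχ.1
  have hχz : χ z = ∑ j, χ (Pi.single j 1, 0) * z.1 j
      + ∑ j, χ (0, Pi.single j 1) * star (z.2 j) := by
    conv_lhs => rw [eq_sum_bAct_single z]
    simp only [← hχ.2]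
    exact (χ'.map_add _ _).trans (congrArg₂ _ (map_sum χ' _ _) (map_sum χ' _ _))
  simp [hχz, bForm, star_sum, star_mul, add_comm]

end bForm

lemma Module.Projective.exists_sum_smul_eq {R M ι : Type*} [Ring R] [AddCommGroup M]
    [Module R M] [Module.Projective R M] [Fintype ι] {e : ι → M}
    (hgen : Submodule.span R (Set.range e) = ⊤) :
    ∃ σ : M →ₗ[R] ι → R, ∀ m, ∑ i, σ m i • e i = m := by
  obtain ⟨σ, hσ⟩ := Module.projective_lifting_property (Fintype.linearCombination R e)
    LinearMap.id ((span_range_eq_top_iff_surjective_fintypeLinearCombination R e).1 hgen)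
  exact ⟨σ, LinearMap.congr_fun hσ⟩

section Embedding

variable {A M : Type*} [Ring A] [StarRing A] [Algebra ℂ A]
  [AddCommGroup M] [Module Aᵐᵒᵖ M] {n : ℕ}
  {h : M → M → A} (e : Fin n → M) (σ : M →ₗ[Aᵐᵒᵖ] Fin n → Aᵐᵒᵖ)

noncomputable def hermitianEmbedding (h : M → M → A) (m : M) : (Fin n → A) × (Fin n → A) :=
  (fun i => unop (σ m i), fun i => (2⁻¹ : ℂ) • h m (e i))

lemma hermitianEmbedding_add (hh : IsHermitianForm h) (m₁ m₂ : M) :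
    hermitianEmbedding e σ h (m₁ + m₂) =
      hermitianEmbedding e σ h m₁ + hermitianEmbedding e σ h m₂ := by
  refine Prod.ext (funext fun i => ?_) (funext fun i => ?_) <;>
    simp [hermitianEmbedding, hh.2.2, smul_add]

lemma hermitianEmbedding_smul (hh : IsHermitianForm h) (a : A) (m : M) :
    hermitianEmbedding e σ h (op a • m) = bAct (hermitianEmbedding e σ h m) a := by
  refine Prod.ext (funext fun i => ?_) (funext fun i => ?_) <;>
    simp [hermitianEmbedding, bAct, hh.smul_left]

lemma bForm_hermitianEmbedding [StarModule ℂ A] (hh : IsHermitianForm h)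
    (hσ : ∀ m, ∑ i, σ m i • e i = m) (m m' : M) :
    bForm (hermitianEmbedding e σ h m) (hermitianEmbedding e σ h m') = h m m' := by
  have half : ∀ m m' : M,
      ∑ i, ((2⁻¹ : ℂ) • h m (e i)) * unop (σ m' i) = (2⁻¹ : ℂ) • h m m' := by
    intro m m'
    simp only [smul_mul_assoc, ← Finset.smul_sum, ← hh.sum_smul_right, op_unop, hσ]
  have star_half : star (2⁻¹ : ℂ) = 2⁻¹ := by norm_num [Complex.ext_iff]
  simp only [bForm, hermitianEmbedding, half, star_smul, star_half, hh.1, ← add_smul]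
  norm_num

end Embedding

section Adjoint

variable {A M : Type*} [Ring A] [StarRing A] [AddCommGroup M] [Module Aᵐᵒᵖ M] {n : ℕ}
  {h : M → M → A} {ι : M → (Fin n → A) × (Fin n → A)}

lemma exists_bForm_adjoint (hinv : IsInvertibleForm h)
    (hι_add : ∀ m₁ m₂, ι (m₁ + m₂) = ι m₁ + ι m₂)
    (hι_smul : ∀ a m, ι (op a • m) = bAct (ι m) a) :
    ∃ Ψ : (Fin n → A) × (Fin n → A) → M, ∀ x m, h (Ψ x) m = bForm x (ι m) := by
  have hdual : ∀ x, IsDualElem fun m => bForm x (ι m) := fun x =>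
    ⟨fun m₁ m₂ => by simp only [hι_add, bForm_add_right],
      fun a m => by simp only [hι_smul, bForm_bAct_right]⟩
  choose Ψ hΨ using fun x => hinv.2 _ (hdual x)
  exact ⟨Ψ, hΨ⟩

lemma exists_orthogonal_projection_of_isometry (hh : IsHermitianForm h)
    (hinv : IsInvertibleForm h) (hι_add : ∀ m₁ m₂, ι (m₁ + m₂) = ι m₁ + ι m₂)
    (hι_smul : ∀ a m, ι (op a • m) = bAct (ι m) a)
    (hι_iso : ∀ m m', bForm (ι m) (ι m') = h m m') :
    ∃ phat : (Fin n → A) × (Fin n → A) → (Fin n → A) × (Fin n → A),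
      (∀ x y, phat (x + y) = phat x + phat y) ∧
      (∀ x a, phat (bAct x a) = bAct (phat x) a) ∧
      (∀ x, phat (phat x) = phat x) ∧
      (∀ x y, bForm (phat x) y = bForm x (phat y)) ∧
      ∃ Φ : (Fin n → A) × (Fin n → A) → M,
        (∀ x y, phat x = x → phat y = y → Φ (x + y) = Φ x + Φ y) ∧
        (∀ x a, phat x = x → Φ (bAct x a) = op a • Φ x) ∧
        (∀ x y, phat x = x → phat y = y → Φ x = Φ y → x = y) ∧
        (∀ m : M, ∃ x, phat x = x ∧ Φ x = m) ∧
        (∀ x y, phat x = x → phat y = y → bForm x y = h (Φ x) (Φ y)) := by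
  obtain ⟨Ψ, hΨ⟩ := exists_bForm_adjoint hinv hι_add hι_smul
  have hΨι : ∀ m, Ψ (ι m) = m := fun m =>
    hinv.1 _ _ fun m' => by rw [hΨ, hι_iso]
  have hΨ_add : ∀ x y, Ψ (x + y) = Ψ x + Ψ y := fun x y =>
    hinv.1 _ _ fun m => by rw [hΨ, bForm_add_left, hh.2.2, hΨ, hΨ]
  have hΨ_smul : ∀ x a, Ψ (bAct x a) = op a • Ψ x := fun x a =>
    hinv.1 _ _ fun m => by rw [hΨ, bForm_bAct_left, hh.smul_left, hΨ]
  refine ⟨fun x => ι (Ψ x), fun x y => by simp only [hΨ_add, hι_add],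
    fun x a => by simp only [hΨ_smul, hι_smul], fun x => by simp only [hΨι],
    fun x y => by rw [← bForm_star y, ← hΨ, ← hΨ, hh.1], Ψ, fun x y _ _ => hΨ_add x y,
    fun x a _ => hΨ_smul x a, fun x y hx hy hxy => hx.symm.trans ((congrArg ι hxy).trans hy),
    fun m => ⟨ι m, by simp only [hΨι], hΨι m⟩,
    fun x y hx hy => (congrArg₂ bForm hx hy).symm.trans (hι_iso _ _)⟩

end Adjoint

/-- Every regular hermitian right `A`-module `(M,h')` generated by
`n` elements is isometric to the image of a projection `p̂` of the free module
`B = Aⁿ ⊕ (Aⁿ)*`, which is orthogonal with respect to the invertible hermitian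
form `b((U,ω),(V,η)) = η(U)* + ω(V)`. -/
theorem regular_hermitian_module_embeds_orthogonally
    {A M : Type*} [Ring A] [StarRing A] [Algebra ℂ A] [StarModule ℂ A]
    [AddCommGroup M] [Module Aᵐᵒᵖ M]
    (n : ℕ) (e : Fin n → M)
    (hgen : Submodule.span Aᵐᵒᵖ (Set.range e) = ⊤)
    (h' : M → M → A)
    (hherm : IsHermitianForm h') (hinv : IsInvertibleForm h')
    (hproj : Module.Projective Aᵐᵒᵖ M) :
    -- b is a hermitian form on B
    ((∀ x y : (Fin n → A) × (Fin n → A), star (bForm x y) = bForm y x) ∧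
     (∀ (x y : (Fin n → A) × (Fin n → A)) (a : A), bForm x (bAct y a) = bForm x y * a) ∧
     (∀ x₁ x₂ y : (Fin n → A) × (Fin n → A), bForm (x₁ + x₂) y = bForm x₁ y + bForm x₂ y)) ∧
    -- b is invertible
    ((∀ x y : (Fin n → A) × (Fin n → A), (∀ z, bForm x z = bForm y z) → x = y) ∧
     (∀ χ : (Fin n → A) × (Fin n → A) → A, IsDualElemB χ → ∃ x, ∀ z, bForm x z = χ z)) ∧
    -- there is an orthogonal projection p̂ of B whose image is isometric to (M,h')
    (∃ phat : (Fin n → A) × (Fin n → A) → (Fin n → A) × (Fin n → A),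
      (∀ x y, phat (x + y) = phat x + phat y) ∧
      (∀ x a, phat (bAct x a) = bAct (phat x) a) ∧
      (∀ x, phat (phat x) = phat x) ∧
      (∀ x y, bForm (phat x) y = bForm x (phat y)) ∧
      ∃ Φ : (Fin n → A) × (Fin n → A) → M,
        (∀ x y, phat x = x → phat y = y → Φ (x + y) = Φ x + Φ y) ∧
        (∀ x a, phat x = x → Φ (bAct x a) = op a • Φ x) ∧
        (∀ x y, phat x = x → phat y = y → Φ x = Φ y → x = y) ∧
        (∀ m : M, ∃ x, phat x = x ∧ Φ x = m) ∧
        (∀ x y, phat x = x → phat y = y → bForm x y = h' (Φ x) (Φ y))) := by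
  obtain ⟨σ, hσ⟩ := Module.Projective.exists_sum_smul_eq hgen
  refine ⟨⟨bForm_star, bForm_bAct_right, bForm_add_left⟩,
    ⟨fun _ _ => bForm_left_injective, fun _ => exists_bForm_eq_of_isDualElemB⟩, ?_⟩
  exact exists_orthogonal_projection_of_isometry hherm hinv (hermitianEmbedding_add e σ hherm)
    (hermitianEmbedding_smul e σ hherm) (bForm_hermitianEmbedding e σ hherm hσ)
end

section
/- Let (A,𝔤) be a Lie pair with hermitian basis {∂_a}_{a=1}^m of 𝔤, and let (Aⁿ,h) be a free regular right hermitian A-module with basis {ê_i}_{i=1}^n; set h_{ij} = h(ê_i,ê_j) and let h^{ij} ∈ A satisfy Σ_j h^{ij}h_{jk} = δ^i_k·1 and (h^{ij})* = h^{ji}. Then a connection ∇ on Aⁿ is hermitian with respect to h if and only if there exist elements γ_{a,ij} ∈ A (a = 1,…,m; i,j = 1,…,n) with γ_{a,ij}* = γ_{a,ji} such that ∇_{∂_a} ê_i = Σ_{j,k} ê_j · h^{jk}·( (1/2)·∂_a(h_{ki}) + i·γ_{a,ki} ) for all a and i. -/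
/-- The right action of `A` on the free right module `Aⁿ`. -/
def smulR {A : Type*} [Ring A] {n : ℕ} (U : Fin n → A) (a : A) : Fin n → A :=
  fun i => U i * a

/-- A (ℂ-linear) derivation of the unital ∗-algebra `A`. -/
def IsCDeriv {A : Type*} [Ring A] [Algebra ℂ A] (δ : A → A) : Prop :=
  (∀ x y, δ (x + y) = δ x + δ y) ∧ (∀ (c : ℂ) (x : A), δ (c • x) = c • δ x) ∧
  (∀ x y, δ (x * y) = δ x * y + x * δ y)

/-- The conjugate derivation `δ*(f) = (δ(f*))*`. -/
def starDeriv {A : Type*} [Ring A] [StarRing A] (δ : A → A) : A → A :=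
  fun f => star (δ (star f))

/-- A Lie pair `(A,𝔤)`: `𝔤` is a (complex) Lie algebra of derivations of `A`
which is closed under `δ ↦ δ*`. -/
def IsLiePair {A : Type*} [Ring A] [StarRing A] [Algebra ℂ A]
    (G : Set (A → A)) : Prop :=
  (∀ δ ∈ G, IsCDeriv δ) ∧
  (∀ δ₁ ∈ G, ∀ δ₂ ∈ G, δ₁ + δ₂ ∈ G) ∧
  (∀ (c : ℂ), ∀ δ ∈ G, c • δ ∈ G) ∧
  (∀ δ₁ ∈ G, ∀ δ₂ ∈ G, (fun x => δ₁ (δ₂ x) - δ₂ (δ₁ x)) ∈ G) ∧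
  (∀ δ ∈ G, starDeriv δ ∈ G)

/-- A hermitian form on the free right module `Aⁿ`. -/
def IsHermitianFormFree {A : Type*} [Ring A] [StarRing A] {n : ℕ}
    (h : (Fin n → A) → (Fin n → A) → A) : Prop :=
  (∀ U V, star (h U V) = h V U) ∧
  (∀ U V a, h U (smulR V a) = h U V * a) ∧
  (∀ U V W, h (U + V) W = h U W + h V W)

/-- A connection `∇ : 𝔤 × Aⁿ → Aⁿ`. -/
def IsConnectionFree {A : Type*} [Ring A] [StarRing A] [Algebra ℂ A] {n : ℕ}
    (G : Set (A → A)) (nab : (A → A) → (Fin n → A) → (Fin n → A)) : Prop :=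
  (∀ δ ∈ G, ∀ U V, nab δ (U + V) = nab δ U + nab δ V) ∧
  (∀ δ₁ ∈ G, ∀ δ₂ ∈ G, ∀ (c₁ c₂ : ℂ) U,
    nab (c₁ • δ₁ + c₂ • δ₂) U = c₁ • nab δ₁ U + c₂ • nab δ₂ U) ∧
  (∀ δ ∈ G, ∀ U a, nab δ (smulR U a) = smulR (nab δ U) a + smulR U (δ a))

/-- The standard basis `ê_i` of the free right module `Aⁿ`. -/
def stdBasis {A : Type*} [Ring A] {n : ℕ} (i : Fin n) : Fin n → A :=
  fun j => if j = i then 1 else 0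

section Aux
variable {A : Type*} [Ring A] [StarRing A] [Algebra ℂ A] [StarModule ℂ A] {n : ℕ}

lemma aux_decomp (W : Fin n → A) : ∑ p, smulR (stdBasis p) (W p) = W := by
  funext l
  rw [Finset.sum_apply]
  simp [smulR, stdBasis, ite_mul]

lemma aux_dzero {δ : A → A} (hδ : IsCDeriv δ) : δ 0 = 0 := by
  have h0 := hδ.2.1 0 0
  simpa using h0

lemma aux_dsum {δ : A → A} (hδ : IsCDeriv δ) {ι : Type*} (s : Finset ι) (f : ι → A) :
    δ (∑ x ∈ s, f x) = ∑ x ∈ s, δ (f x) := by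
  classical
  induction s using Finset.induction_on with
  | empty => simpa using aux_dzero hδ
  | insert _ _ hx ih => rw [Finset.sum_insert hx, Finset.sum_insert hx, hδ.1, ih]

variable {h : (Fin n → A) → (Fin n → A) → A} (hh : IsHermitianFormFree h)
include hh

lemma aux_add2 (U V W : Fin n → A) : h U (V + W) = h U V + h U W := by
  calc h U (V + W) = star (h (V + W) U) := (hh.1 _ _).symm
    _ = star (h V U + h W U) := by rw [hh.2.2]
    _ = h U V + h U W := by rw [star_add, hh.1, hh.1]

lemma aux_smul1 (U V : Fin n → A) (a : A) : h (smulR U a) V = star a * h U V := by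
  calc h (smulR U a) V = star (h V (smulR U a)) := (hh.1 _ _).symm
    _ = star (h V U * a) := by rw [hh.2.1]
    _ = star a * h U V := by rw [star_mul, hh.1]

lemma aux_zero2 (U : Fin n → A) : h U 0 = 0 := by
  have h0 := aux_add2 hh U 0 0
  rw [add_zero] at h0
  exact (left_eq_add.mp h0)

lemma aux_zero1 (U : Fin n → A) : h 0 U = 0 := by
  have h0 := hh.2.2 0 0 U
  rw [add_zero] at h0
  exact (left_eq_add.mp h0)

lemma aux_sum2 {ι : Type*} (s : Finset ι) (f : ι → Fin n → A) (U : Fin n → A) :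
    h U (∑ x ∈ s, f x) = ∑ x ∈ s, h U (f x) := by
  classical
  induction s using Finset.induction_on with
  | empty => simpa using aux_zero2 hh U
  | insert _ _ hx ih => rw [Finset.sum_insert hx, Finset.sum_insert hx, aux_add2 hh, ih]

lemma aux_sum1 {ι : Type*} (s : Finset ι) (f : ι → Fin n → A) (U : Fin n → A) :
    h (∑ x ∈ s, f x) U = ∑ x ∈ s, h (f x) U := by
  classical
  induction s using Finset.induction_on with
  | empty => simpa using aux_zero1 hh U
  | insert _ _ hx ih => rw [Finset.sum_insert hx, Finset.sum_insert hx, hh.2.2, ih]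

lemma aux_csmul2 (c : ℂ) (U V : Fin n → A) : h U (c • V) = c • h U V := by
  have e : c • V = smulR V (algebraMap ℂ A c) := by
    funext i
    simp [smulR, Algebra.smul_def, Algebra.commutes]
  rw [e, hh.2.1, ← Algebra.commutes, ← Algebra.smul_def]

lemma aux_csmul1 (c : ℂ) (U V : Fin n → A) : h (c • U) V = star c • h U V := by
  calc h (c • U) V = star (h V (c • U)) := (hh.1 _ _).symm
    _ = star (c • h V U) := by rw [aux_csmul2 hh]
    _ = star c • h U V := by rw [star_smul, hh.1]

lemma aux_hX2 (U V : Fin n → A) :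
    h U V = ∑ q, h U (stdBasis q) * V q := by
  conv_lhs => rw [← aux_decomp V]
  rw [aux_sum2 hh]
  exact Finset.sum_congr rfl fun q _ => hh.2.1 _ _ _

lemma aux_hX1 (U V : Fin n → A) :
    h U V = ∑ p, star (U p) * h (stdBasis p) V := by
  conv_lhs => rw [← aux_decomp U]
  rw [aux_sum1 hh]
  exact Finset.sum_congr rfl fun p _ => aux_smul1 hh _ _ _

variable (hu : Fin n → Fin n → A)
    (hustar : ∀ i j, star (hu i j) = hu j i)
    (huinv : ∀ i k, (∑ j, hu i j * h (stdBasis j) (stdBasis k)) =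
      if i = k then (1 : A) else 0)

include hustar huinv in
lemma aux_huinv' (p k : Fin n) :
    (∑ j, h (stdBasis p) (stdBasis j) * hu j k) = if p = k then (1 : A) else 0 := by
  have hc := congrArg star (huinv k p)
  rw [star_sum] at hc
  simp only [star_mul, hh.1, hustar] at hc
  rw [hc]
  simp [eq_comm, apply_ite (star : A → A)]

include hustar huinv in
lemma aux_resolution (W : Fin n → A) :
    ∑ j, ∑ k, smulR (stdBasis j) (hu j k * h (stdBasis k) W) = W := by
  have hexp : ∀ k, h (stdBasis k) W = ∑ q, h (stdBasis k) (stdBasis q) * W q :=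
    fun k => aux_hX2 hh _ _
  funext l
  rw [Finset.sum_apply]
  have e1 : ∀ j, (∑ k, smulR (stdBasis j) (hu j k * h (stdBasis k) W)) l
      = stdBasis j l * (∑ k, hu j k * h (stdBasis k) W) := by
    intro j; rw [Finset.sum_apply, Finset.mul_sum]; rfl
  rw [Finset.sum_congr rfl fun j _ => e1 j]
  simp only [stdBasis, ite_mul, one_mul, zero_mul]
  rw [Finset.sum_ite_eq (Finset.univ : Finset (Fin n)) l
    (fun j => ∑ k, hu j k * h (stdBasis k) W)]
  simp only [Finset.mem_univ, if_true]
  calc (∑ k, hu l k * h (stdBasis k) W)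
      = ∑ k, ∑ q, (hu l k * h (stdBasis k) (stdBasis q)) * W q := by
        refine Finset.sum_congr rfl fun k _ => ?_
        rw [hexp k, Finset.mul_sum]
        exact Finset.sum_congr rfl fun q _ => (mul_assoc _ _ _).symm
    _ = ∑ q, (∑ k, hu l k * h (stdBasis k) (stdBasis q)) * W q := by
        rw [Finset.sum_comm]
        exact Finset.sum_congr rfl fun q _ => (Finset.sum_mul _ _ _).symm
    _ = W l := by
        simp only [huinv]
        simp [ite_mul]

end Aux

section AuxN
variable {A : Type*} [Ring A] [StarRing A] [Algebra ℂ A] [StarModule ℂ A] {n : ℕ}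
  {G : Set (A → A)} {nab : (A → A) → (Fin n → A) → (Fin n → A)}
  (hc : IsConnectionFree G nab)
include hc

lemma aux_nzero {δ : A → A} (hδ : δ ∈ G) : nab δ 0 = 0 := by
  have h0 : (0 : Fin n → A) = smulR 0 0 := by funext i; simp [smulR]
  calc nab δ 0 = nab δ (smulR 0 0) := by rw [← h0]
    _ = smulR (nab δ 0) 0 + smulR 0 (δ 0) := hc.2.2 δ hδ 0 0
    _ = 0 := by funext i; simp [smulR]

lemma aux_nsum {δ : A → A} (hδ : δ ∈ G) {ι : Type*} (s : Finset ι)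
    (f : ι → Fin n → A) :
    nab δ (∑ x ∈ s, f x) = ∑ x ∈ s, nab δ (f x) := by
  classical
  induction s using Finset.induction_on with
  | empty => simpa using aux_nzero hc hδ
  | insert _ _ hx ih =>
    rw [Finset.sum_insert hx, Finset.sum_insert hx, hc.1 δ hδ, ih]

lemma aux_nexp {δ : A → A} (hδ : δ ∈ G) (U : Fin n → A) :
    nab δ U = ∑ p, (smulR (nab δ (stdBasis p)) (U p) + smulR (stdBasis p) (δ (U p))) := by
  conv_lhs => rw [← aux_decomp U]
  rw [aux_nsum hc hδ]
  exact Finset.sum_congr rfl fun p _ => hc.2.2 δ hδ _ _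

end AuxN

/-- Let `{∂_a}` be a hermitian basis of `𝔤` and `{ê_i}` the
standard basis of the free regular hermitian module `(Aⁿ,h)`, with
`h_{ij} = h(ê_i,ê_j)` and `h^{ij}` satisfying `Σ_j h^{ij}h_{jk} = δ^i_k` and
`(h^{ij})* = h^{ji}`.  A connection `∇` on `Aⁿ` is hermitian iff there exist
`γ_{a,ij} ∈ A` with `γ_{a,ij}* = γ_{a,ji}` such that
`∇_{∂_a} ê_i = Σ_{j,k} ê_j·h^{jk}·((1/2)∂_a(h_{ki}) + i·γ_{a,ki})`. -/
theorem hermitian_connection_free_module_characterization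
    {A : Type*} [Ring A] [StarRing A] [Algebra ℂ A] [StarModule ℂ A]
    (n m : ℕ) (G : Set (A → A)) (hG : IsLiePair G)
    (pd : Fin m → (A → A))
    (hmem : ∀ a, pd a ∈ G)
    (hsa : ∀ a, starDeriv (pd a) = pd a)
    (hspan : ∀ δ ∈ G, ∃ c : Fin m → ℂ, δ = ∑ a, c a • pd a)
    (hindep : ∀ c : Fin m → ℂ, (∑ a, c a • pd a) = 0 → ∀ a, c a = 0)
    (h : (Fin n → A) → (Fin n → A) → A) (hherm : IsHermitianFormFree h)
    (hu : Fin n → Fin n → A)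
    (hustar : ∀ i j, star (hu i j) = hu j i)
    (huinv : ∀ i k, (∑ j, hu i j * h (stdBasis j) (stdBasis k)) =
      if i = k then (1 : A) else 0)
    (nab : (A → A) → (Fin n → A) → (Fin n → A))
    (hconn : IsConnectionFree G nab) :
    (∀ δ ∈ G, ∀ U V, δ (h U V) = h (nab (starDeriv δ) U) V + h U (nab δ V)) ↔
      ∃ γ : Fin m → Fin n → Fin n → A,
        (∀ a i j, star (γ a i j) = γ a j i) ∧
        ∀ a i, nab (pd a) (stdBasis i) =
          ∑ j, ∑ k, smulR (stdBasis j)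
            (hu j k * ((1 / 2 : ℂ) • pd a (h (stdBasis k) (stdBasis i)) +
              Complex.I • γ a k i)) := by
  classical
  have pdstar : ∀ (a : Fin m) (x : A), star (pd a x) = pd a (star x) := by
    intro a x
    conv_rhs => rw [← hsa a]
    simp [starDeriv]
  have sHalf : star ((1 : ℂ)/2) = (1 : ℂ)/2 := by
    rw [star_div₀, star_one]
    norm_num
  have sI : star Complex.I = -Complex.I := by
    rw [Complex.star_def, Complex.conj_I]
  have sNegI2 : star (-(Complex.I)/2) = Complex.I/2 := by
    rw [star_div₀, star_neg, sI, neg_neg]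
    norm_num
  have hI : Complex.I * (-(Complex.I)/2) = 1/2 := by
    rw [← mul_div_assoc, mul_neg, Complex.I_mul_I, neg_neg]
  constructor
  · -- forward direction
    intro H
    have hbasis : ∀ a k i, pd a (h (stdBasis k) (stdBasis i)) =
        star (h (stdBasis i) (nab (pd a) (stdBasis k))) +
          h (stdBasis k) (nab (pd a) (stdBasis i)) := by
      intro a k i
      have hH := H (pd a) (hmem a) (stdBasis k) (stdBasis i)
      rw [hsa a] at hH
      rw [hH]
      congr 1
      exact (hherm.1 _ _).symm
    refine ⟨fun a k i => (-(Complex.I)/2) •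
      (h (stdBasis k) (nab (pd a) (stdBasis i)) -
        star (h (stdBasis i) (nab (pd a) (stdBasis k)))), ?_, ?_⟩
    · intro a i j
      rw [star_smul, star_sub, star_star, sNegI2]
      module
    · intro a i
      have hθω : ∀ k, (1/2 : ℂ) • pd a (h (stdBasis k) (stdBasis i)) +
          Complex.I • ((-(Complex.I)/2) •
            (h (stdBasis k) (nab (pd a) (stdBasis i)) -
              star (h (stdBasis i) (nab (pd a) (stdBasis k))))) =
          h (stdBasis k) (nab (pd a) (stdBasis i)) := by
        intro k
        rw [smul_smul, hI, hbasis a k i]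
        module
      simp only [hθω]
      exact (aux_resolution hherm hu hustar huinv _).symm
  · -- converse direction
    rintro ⟨γ, hγs, hγf⟩ δ hδ U V
    have hd : IsCDeriv δ := hG.1 δ hδ
    -- h(ê_p, ∇_a ê_q) = θ_{a,pq}
    have hθ : ∀ a p q, h (stdBasis p) (nab (pd a) (stdBasis q)) =
        (1/2 : ℂ) • pd a (h (stdBasis p) (stdBasis q)) + Complex.I • γ a p q := by
      intro a p q
      rw [hγf a q, aux_sum2 hherm]
      have e6 : ∀ j, h (stdBasis p) (∑ k, smulR (stdBasis j)
          (hu j k * ((1/2 : ℂ) • pd a (h (stdBasis k) (stdBasis q)) + Complex.I • γ a k q)))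
          = ∑ k, (h (stdBasis p) (stdBasis j) * hu j k) *
            ((1/2 : ℂ) • pd a (h (stdBasis k) (stdBasis q)) + Complex.I • γ a k q) := by
        intro j
        rw [aux_sum2 hherm]
        refine Finset.sum_congr rfl fun k _ => ?_
        rw [hherm.2.1, ← mul_assoc]
      rw [Finset.sum_congr rfl fun j _ => e6 j, Finset.sum_comm]
      have e7 : ∀ k, (∑ j, (h (stdBasis p) (stdBasis j) * hu j k) *
          ((1/2 : ℂ) • pd a (h (stdBasis k) (stdBasis q)) + Complex.I • γ a k q))
          = (if p = k then (1:A) else 0) *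
            ((1/2 : ℂ) • pd a (h (stdBasis k) (stdBasis q)) + Complex.I • γ a k q) := by
        intro k
        rw [← Finset.sum_mul, aux_huinv' hherm hu hustar huinv]
      rw [Finset.sum_congr rfl fun k _ => e7 k]
      simp [ite_mul]
    -- basis identity for the ∂_a
    have key : ∀ a p q, pd a (h (stdBasis p) (stdBasis q)) =
        h (nab (pd a) (stdBasis p)) (stdBasis q) +
          h (stdBasis p) (nab (pd a) (stdBasis q)) := by
      intro a p q
      rw [← hherm.1 (stdBasis q) (nab (pd a) (stdBasis p))]
      rw [hθ a q p, hθ a p q]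
      rw [star_add, star_smul, star_smul, pdstar, hherm.1, hγs, sHalf, sI]
      module
    -- linearity machinery
    have hG0 : (0 : A → A) ∈ G := by
      have h0 := hG.2.2.1 0 δ hδ
      simpa using h0
    have hGsum : ∀ (s : Finset (Fin m)) (c : Fin m → ℂ),
        (∑ a ∈ s, c a • pd a) ∈ G := by
      intro s c
      induction s using Finset.induction_on with
      | empty => simpa using hG0
      | @insert a s hx ih =>
        rw [Finset.sum_insert hx]
        exact hG.2.1 _ (hG.2.2.1 (c a) (pd a) (hmem a)) _ ih
    have hnab0 : ∀ W : Fin n → A, nab 0 W = 0 := by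
      intro W
      have h0 := hconn.2.1 δ hδ δ hδ 0 0 W
      simpa using h0
    have hnsum : ∀ (s : Finset (Fin m)) (c : Fin m → ℂ) (W : Fin n → A),
        nab (∑ a ∈ s, c a • pd a) W = ∑ a ∈ s, c a • nab (pd a) W := by
      intro s c W
      induction s using Finset.induction_on with
      | empty => simpa using hnab0 W
      | @insert a s hx ih =>
        rw [Finset.sum_insert hx, Finset.sum_insert hx]
        have h2 := hconn.2.1 (pd a) (hmem a) (∑ b ∈ s, c b • pd b) (hGsum s c) (c a) 1 W
        rw [one_smul, one_smul] at h2
        rw [h2, ih]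
    have hsd : ∀ (s : Finset (Fin m)) (c : Fin m → ℂ) (x : A),
        starDeriv (∑ a ∈ s, c a • pd a) x = ∑ a ∈ s, star (c a) • pd a x := by
      intro s c x
      simp only [starDeriv, Finset.sum_apply, Pi.smul_apply, star_sum, star_smul]
      refine Finset.sum_congr rfl fun a _ => ?_
      rw [pdstar, star_star]
    -- basis identity for δ
    have keyδ : ∀ p q, δ (h (stdBasis p) (stdBasis q)) =
        h (nab (starDeriv δ) (stdBasis p)) (stdBasis q) +
          h (stdBasis p) (nab δ (stdBasis q)) := by
      obtain ⟨c, hc⟩ := hspan δ hδ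
      intro p q
      have hsδ : starDeriv δ = ∑ a, star (c a) • pd a := by
        funext x
        rw [hc, hsd]
        simp [Finset.sum_apply]
      rw [hsδ, hc, hnsum, hnsum, Finset.sum_apply]
      simp only [Pi.smul_apply]
      rw [aux_sum1 hherm, aux_sum2 hherm]
      have e4 : ∀ a, h (star (c a) • nab (pd a) (stdBasis p)) (stdBasis q) =
          c a • h (nab (pd a) (stdBasis p)) (stdBasis q) := by
        intro a
        rw [aux_csmul1 hherm, star_star]
      have e5 : ∀ a, h (stdBasis p) (c a • nab (pd a) (stdBasis q)) =
          c a • h (stdBasis p) (nab (pd a) (stdBasis q)) :=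
        fun a => aux_csmul2 hherm _ _ _
      rw [Finset.sum_congr rfl fun a _ => e4 a, Finset.sum_congr rfl fun a _ => e5 a,
        ← Finset.sum_add_distrib]
      refine Finset.sum_congr rfl fun a _ => ?_
      rw [← smul_add, key a p q]
    -- stage 1: first slot a basis vector
    have key1 : ∀ p (W : Fin n → A), δ (h (stdBasis p) W) =
        h (nab (starDeriv δ) (stdBasis p)) W + h (stdBasis p) (nab δ W) := by
      intro p W
      rw [aux_hX2 hherm (stdBasis p) W, aux_dsum hd]
      rw [Finset.sum_congr rfl fun q _ => hd.2.2 (h (stdBasis p) (stdBasis q)) (W q)]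
      rw [aux_hX2 hherm (nab (starDeriv δ) (stdBasis p)) W]
      rw [aux_nexp hconn hδ W, aux_sum2 hherm]
      have e2 : ∀ q, h (stdBasis p)
          (smulR (nab δ (stdBasis q)) (W q) + smulR (stdBasis q) (δ (W q))) =
          h (stdBasis p) (nab δ (stdBasis q)) * W q +
            h (stdBasis p) (stdBasis q) * δ (W q) := by
        intro q
        rw [aux_add2 hherm, hherm.2.1, hherm.2.1]
      rw [Finset.sum_congr rfl fun q _ => e2 q, ← Finset.sum_add_distrib]
      refine Finset.sum_congr rfl fun q _ => ?_
      rw [keyδ p q, add_mul, add_assoc]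
    -- stage 2: general vectors
    have hsd2 : ∀ x : A, star (starDeriv δ x) = δ (star x) := by
      intro x
      simp [starDeriv]
    rw [aux_hX1 hherm U V, aux_dsum hd]
    rw [Finset.sum_congr rfl fun p _ => hd.2.2 (star (U p)) (h (stdBasis p) V)]
    rw [aux_hX1 hherm U (nab δ V)]
    rw [aux_nexp hconn (hG.2.2.2.2 δ hδ) U, aux_sum1 hherm]
    have e3 : ∀ p, h (smulR (nab (starDeriv δ) (stdBasis p)) (U p) +
        smulR (stdBasis p) (starDeriv δ (U p))) V =
        star (U p) * h (nab (starDeriv δ) (stdBasis p)) V +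
          δ (star (U p)) * h (stdBasis p) V := by
      intro p
      rw [hherm.2.2, aux_smul1 hherm, aux_smul1 hherm, hsd2]
    rw [Finset.sum_congr rfl fun p _ => e3 p, ← Finset.sum_add_distrib]
    refine Finset.sum_congr rfl fun p _ => ?_
    rw [key1 p V, mul_add]
    abel
end

section
/- Let S be the fuzzy sphere algebra with hermitian generators X₁,X₂,X₃. On the free right module S³ define Π(U) = ê_i·(X_i X_j)·U_j (sum over i,j) for U = ê_j U_j. Then Π² = Π, and Π is orthogonal with respect to the hermitian form h̃(U,V) = Σ_k (U_k)* V_k, i.e. h̃(Π(U),V) = h̃(U,Π(V)) for all U,V ∈ S³. -/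
/-- The totally antisymmetric Levi-Civita symbol `ε_{ijk}` on three indices,
with `ε₁₂₃ = 1`. -/
def eps (i j k : Fin 3) : ℤ :=
  if (i, j, k) = (0, 1, 2) ∨ (i, j, k) = (1, 2, 0) ∨ (i, j, k) = (2, 0, 1) then 1
  else if (i, j, k) = (2, 1, 0) ∨ (i, j, k) = (1, 0, 2) ∨ (i, j, k) = (0, 2, 1) then -1
  else 0

/-- The hermitian form `h̃(U,V) = Σ_k (U_k)*·V_k` on the free right module `Sⁿ`. -/
def hform {S : Type*} [Ring S] [StarRing S] {n : ℕ} (U V : Fin n → S) : S :=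
  ∑ k, star (U k) * V k

/-- The map `Π(U) = ê_i·(X_i X_j)·U_j` on `S³`. -/
def fuzzyProj {S : Type*} [Ring S] (X : Fin 3 → S) (U : Fin 3 → S) : Fin 3 → S :=
  fun i => ∑ j, X i * X j * U j

/-- On the fuzzy sphere, the map `Π(U) = ê_i·(X_iX_j)·U_j` on `S³`
is an idempotent which is orthogonal with respect to `h̃(U,V) = Σ_k (U_k)*V_k`. -/
theorem fuzzy_sphere_projection_orthogonal
    (ℏ : ℝ) (hℏ : 0 < ℏ)
    {S : Type*} [Ring S] [StarRing S] [Algebra ℂ S] [StarModule ℂ S]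
    (X : Fin 3 → S)
    (hX : ∀ i, star (X i) = X i)
    (hcomm : ∀ i j, X i * X j - X j * X i =
      ∑ k, (Complex.I * (ℏ : ℂ) * (eps i j k : ℂ)) • X k)
    (hsum : (∑ k, X k * X k) = 1) :
    (∀ U : Fin 3 → S, fuzzyProj X (fuzzyProj X U) = fuzzyProj X U) ∧
    (∀ U V : Fin 3 → S, hform (fuzzyProj X U) V = hform U (fuzzyProj X V)) := by
  have key : ∀ a : S, ∑ j, X j * (X j * a) = a := by
    intro a
    have h : ∑ j, X j * (X j * a) = (∑ j, X j * X j) * a := by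
      rw [Finset.sum_mul]
      exact Finset.sum_congr rfl fun j _ => (mul_assoc _ _ _).symm
    rw [h, hsum, one_mul]
  constructor
  · intro U
    funext i
    simp only [fuzzyProj, Finset.mul_sum]
    rw [Finset.sum_comm]
    refine Finset.sum_congr rfl fun k _ => ?_
    simp only [mul_assoc]
    rw [← Finset.mul_sum, key]
  · intro U V
    simp only [hform, fuzzyProj, star_sum, Finset.sum_mul, Finset.mul_sum]
    rw [Finset.sum_comm]
    refine Finset.sum_congr rfl fun j _ => Finset.sum_congr rfl fun i _ => ?_
    simp [star_mul, hX, mul_assoc]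
end

section
/- Let S be the fuzzy sphere algebra with hermitian generators X₁,X₂,X₃. In the free right module S³ set P_{ij} = δ_{ij}·1 − X_iX_j, ẽ_i = Σ_j ê_j·P_{ji}, ξ = Σ_i ê_i·X_i, and e_i = Σ_{j,k} ε_{ijk}·ẽ_j·X_k. Then for each i = 1,2,3: (1) e_i = Σ_{j,k} ε_{ijk}·ê_j·X_k − iℏ·ξ·X_i; and (2) ẽ_i = −Σ_{j,k} ε_{ijk}·e_j·X_k + iℏ·e_i. In particular e₁,e₂,e₃ generate the same right submodule of S³ as ẽ₁,ẽ₂,ẽ₃. -/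
/-- The entries `P_{ij} = δ_{ij}·1 − X_iX_j` of the tangent projection. -/
def Pm {S : Type*} [Ring S] (X : Fin 3 → S) (i j : Fin 3) : S :=
  (if i = j then 1 else 0) - X i * X j

/-- The generators `ẽ_i = Σ_j ê_j·P_{ji}` of the tangent module `TS²ℏ`
(the `l`-th coordinate of `ẽ_i` is `P_{li}`). -/
def et {S : Type*} [Ring S] (X : Fin 3 → S) (i : Fin 3) : Fin 3 → S :=
  fun l => Pm X l i

set_option maxHeartbeats 4000000

/-- The generators `e_i = Σ_{j,k} ε_{ijk}·ẽ_j·X_k` of the tangent module. -/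
def eV {S : Type*} [Ring S] [Algebra ℂ S] (X : Fin 3 → S) (i : Fin 3) : Fin 3 → S :=
  fun l => ∑ j, ∑ k, ((eps i j k : ℂ)) • (et X j l * X k)

/-- On the fuzzy sphere, with `ξ = Σ_i ê_i·X_i`, one has
`e_i = Σ_{j,k} ε_{ijk}·ê_j·X_k − iℏ·ξ·X_i` and
`ẽ_i = −Σ_{j,k} ε_{ijk}·e_j·X_k + iℏ·e_i`; in particular `e₁,e₂,e₃` generate the
same right submodule of `S³` as `ẽ₁,ẽ₂,ẽ₃`. -/
theorem fuzzy_sphere_tangent_generators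
    (ℏ : ℝ) (hℏ : 0 < ℏ)
    {S : Type*} [Ring S] [StarRing S] [Algebra ℂ S] [StarModule ℂ S]
    (X : Fin 3 → S)
    (hX : ∀ i, star (X i) = X i)
    (hcomm : ∀ i j, X i * X j - X j * X i =
      ∑ k, (Complex.I * (ℏ : ℂ) * (eps i j k : ℂ)) • X k)
    (hsum : (∑ k, X k * X k) = 1) :
    (∀ i l, eV X i l =
      (∑ j, ∑ k, ((eps i j k : ℂ)) • ((if j = l then (1 : S) else 0) * X k)) -
        (Complex.I * (ℏ : ℂ)) • (X l * X i)) ∧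
    (∀ i l, et X i l =
      -(∑ j, ∑ k, ((eps i j k : ℂ)) • (eV X j l * X k)) +
        (Complex.I * (ℏ : ℂ)) • eV X i l) ∧
    Submodule.span Sᵐᵒᵖ (Set.range (eV X)) =
      Submodule.span Sᵐᵒᵖ (Set.range (et X)) := by
  have h10 : X 1 * X 0 = X 0 * X 1 - (Complex.I * (ℏ:ℂ)) • X 2 := by
    have h := hcomm 1 0; simp [eps, Fin.sum_univ_three] at h
    linear_combination (norm := module) h
  have h20 : X 2 * X 0 = X 0 * X 2 + (Complex.I * (ℏ:ℂ)) • X 1 := by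
    have h := hcomm 2 0; simp [eps, Fin.sum_univ_three] at h
    linear_combination (norm := module) h
  have h21 : X 2 * X 1 = X 1 * X 2 - (Complex.I * (ℏ:ℂ)) • X 0 := by
    have h := hcomm 2 1; simp [eps, Fin.sum_univ_three] at h
    linear_combination (norm := module) h
  have h22 : X 2 * X 2 = 1 - X 0 * X 0 - X 1 * X 1 := by
    have h := hsum; simp [Fin.sum_univ_three] at h
    linear_combination (norm := module) h
  have h10' : ∀ t, X 1 * (X 0 * t) = X 0 * (X 1 * t) - (Complex.I * (ℏ:ℂ)) • (X 2 * t) := by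
    intro t; rw [← mul_assoc, h10]; simp [sub_mul, smul_mul_assoc, mul_assoc]
  have h20' : ∀ t, X 2 * (X 0 * t) = X 0 * (X 2 * t) + (Complex.I * (ℏ:ℂ)) • (X 1 * t) := by
    intro t; rw [← mul_assoc, h20]; simp [add_mul, smul_mul_assoc, mul_assoc]
  have h21' : ∀ t, X 2 * (X 1 * t) = X 1 * (X 2 * t) - (Complex.I * (ℏ:ℂ)) • (X 0 * t) := by
    intro t; rw [← mul_assoc, h21]; simp [sub_mul, smul_mul_assoc, mul_assoc]
  have h22' : ∀ t, X 2 * (X 2 * t) = t - X 0 * (X 0 * t) - X 1 * (X 1 * t) := by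
    intro t; rw [← mul_assoc, h22]; simp [sub_mul, smul_mul_assoc, mul_assoc]
  have part1 : ∀ i l, eV X i l =
      (∑ j, ∑ k, ((eps i j k : ℂ)) • ((if j = l then (1 : S) else 0) * X k)) -
        (Complex.I * (ℏ : ℂ)) • (X l * X i) := by
    intro i l
    fin_cases i <;> fin_cases l <;>
      simp [eV, et, Pm, eps, Fin.sum_univ_three] <;>
      simp only [sub_mul, mul_sub, add_mul, mul_add, smul_mul_assoc,
        mul_smul_comm, smul_sub, smul_add, smul_smul, smul_neg, neg_mul, mul_neg, neg_neg,
        one_mul, mul_one, mul_assoc, h10', h20', h21', h22', h10, h20, h21, h22] <;>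
      match_scalars <;>
      simp [Complex.I_sq] <;>
      ring_nf <;>
      simp [Complex.I_sq]
  have part2 : ∀ i l, et X i l =
      -(∑ j, ∑ k, ((eps i j k : ℂ)) • (eV X j l * X k)) +
        (Complex.I * (ℏ : ℂ)) • eV X i l := by
    intro i l
    fin_cases i <;> fin_cases l <;>
      simp [eV, et, Pm, eps, Fin.sum_univ_three] <;>
      simp only [sub_mul, mul_sub, add_mul, mul_add, smul_mul_assoc,
        mul_smul_comm, smul_sub, smul_add, smul_smul, smul_neg, neg_mul, mul_neg, neg_neg,
        one_mul, mul_one, mul_assoc, h10', h20', h21', h22', h10, h20, h21, h22] <;>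
      match_scalars <;>
      simp [Complex.I_sq] <;>
      ring_nf <;>
      simp [Complex.I_sq]
  refine ⟨part1, part2, le_antisymm ?_ ?_⟩
  · rw [Submodule.span_le]
    rintro _ ⟨i, rfl⟩
    have hrepr : eV X i = ∑ j, MulOpposite.op (∑ k, ((eps i j k : ℂ)) • X k) • et X j := by
      funext l
      simp [eV, MulOpposite.smul_eq_mul_unop, Finset.mul_sum, mul_smul_comm]
    rw [hrepr]
    exact Submodule.sum_mem _ fun j _ =>
      Submodule.smul_mem _ _ (Submodule.subset_span ⟨j, rfl⟩)
  · rw [Submodule.span_le]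
    rintro _ ⟨i, rfl⟩
    have hrepr : et X i =
        (∑ j, MulOpposite.op (-(∑ k, ((eps i j k : ℂ)) • X k)) • eV X j) +
          MulOpposite.op (algebraMap ℂ S (Complex.I * (ℏ : ℂ))) • eV X i := by
      funext l
      have := part2 i l
      rw [this]
      simp only [Pi.add_apply, Finset.sum_apply, Pi.smul_apply,
        MulOpposite.smul_eq_mul_unop, MulOpposite.unop_op, mul_neg, Finset.mul_sum,
        mul_smul_comm, ← Algebra.commutes, ← Algebra.smul_def, Finset.sum_neg_distrib]
    rw [hrepr]
    exact Submodule.add_mem _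
      (Submodule.sum_mem _ fun j _ =>
        Submodule.smul_mem _ _ (Submodule.subset_span ⟨j, rfl⟩))
      (Submodule.smul_mem _ _ (Submodule.subset_span ⟨i, rfl⟩))
end

section
/- Let S be the fuzzy sphere algebra with hermitian generators X₁,X₂,X₃ and derivations ∂_i(f) = (1/(iℏ))·[X_i, f]. In S³ set P_{ij} = δ_{ij}·1 − X_iX_j, ẽ_i = Σ_j ê_j·P_{ji}, and e_i = Σ_{j,k} ε_{ijk}·ẽ_j·X_k. Then for all i,j = 1,2,3: Σ_k ẽ_k·∂_i(P_{kj}) = −e_i·X_j. -/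
/-- The inner derivations `∂_i(f) = (1/(iℏ))·[X_i,f]` of the fuzzy sphere. -/
noncomputable def fuzzyDeriv (ℏ : ℝ) {S : Type*} [Ring S] [Algebra ℂ S]
    (X : Fin 3 → S) (i : Fin 3) (f : S) : S :=
  (Complex.I * (ℏ : ℂ))⁻¹ • (X i * f - f * X i)

/-- On the fuzzy sphere, `Σ_k ẽ_k·∂_i(P_{kj}) = −e_i·X_j`
(Lemma on `ẽ_k ∂_i P_{kj}`). -/
theorem fuzzy_sphere_et_dP
    (ℏ : ℝ) (hℏ : 0 < ℏ)
    {S : Type*} [Ring S] [StarRing S] [Algebra ℂ S] [StarModule ℂ S]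
    (X : Fin 3 → S)
    (hX : ∀ i, star (X i) = X i)
    (hcomm : ∀ i j, X i * X j - X j * X i =
      ∑ k, (Complex.I * (ℏ : ℂ) * (eps i j k : ℂ)) • X k)
    (hsum : (∑ k, X k * X k) = 1) :
    ∀ i j l, (∑ k, Pm X l k * fuzzyDeriv ℏ X i (Pm X k j)) = -(eV X i l * X j) := by

  intro i j l
  have hc : (Complex.I * (ℏ : ℂ)) ≠ 0 := by
    refine mul_ne_zero Complex.I_ne_zero ?_
    exact_mod_cast ne_of_gt hℏ
  -- derivative of P
  have dP : ∀ a b c : Fin 3, fuzzyDeriv ℏ X a (Pm X b c) =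
      ∑ m, (-(eps a b m : ℂ)) • (X m * X c) + ∑ m, (-(eps a c m : ℂ)) • (X b * X m) := by
    intro a b c
    have key : X a * Pm X b c - Pm X b c * X a
        = -((X a * X b - X b * X a) * X c) + -(X b * (X a * X c - X c * X a)) := by
      unfold Pm; split <;> noncomm_ring
    unfold fuzzyDeriv
    rw [key, hcomm, hcomm, Finset.sum_mul, Finset.mul_sum]
    simp only [smul_mul_assoc, mul_smul_comm, smul_add, Finset.smul_sum, smul_neg, smul_smul,
      inv_mul_cancel_left₀ hc, neg_smul, Finset.sum_neg_distrib]
  have hA : ∑ k, Pm X l k * X k = 0 := by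
    have h1 : ∑ k, Pm X l k * X k
        = (∑ k, (if l = k then X k else 0)) - X l * ∑ k, X k * X k := by
      rw [Finset.mul_sum, ← Finset.sum_sub_distrib]
      refine Finset.sum_congr rfl fun k _ => ?_
      unfold Pm
      rw [sub_mul, ite_mul, one_mul, zero_mul, mul_assoc]
    rw [h1, hsum, mul_one, Finset.sum_ite_eq]
    simp
  calc ∑ k, Pm X l k * fuzzyDeriv ℏ X i (Pm X k j)
      = ∑ k, ((∑ m, (-(eps i k m : ℂ)) • (Pm X l k * X m * X j))
            + ∑ m, (-(eps i j m : ℂ)) • (Pm X l k * (X k * X m))) := by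
        refine Finset.sum_congr rfl fun k _ => ?_
        rw [dP, mul_add, Finset.mul_sum, Finset.mul_sum]
        congr 1
        · exact Finset.sum_congr rfl fun m _ => by rw [mul_smul_comm, mul_assoc]
        · exact Finset.sum_congr rfl fun m _ => by rw [mul_smul_comm]
    _ = (∑ k, ∑ m, (-(eps i k m : ℂ)) • (Pm X l k * X m * X j))
        + ∑ m, (-(eps i j m : ℂ)) • ((∑ k, Pm X l k * X k) * X m) := by
        rw [Finset.sum_add_distrib]
        congr 1
        rw [Finset.sum_comm]
        refine Finset.sum_congr rfl fun m _ => ?_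
        rw [Finset.sum_mul, Finset.smul_sum]
        exact Finset.sum_congr rfl fun k _ => by rw [mul_assoc]
    _ = -(eV X i l * X j) := by
        rw [hA]
        simp only [zero_mul, smul_zero, Finset.sum_const_zero, add_zero]
        unfold eV et
        rw [Finset.sum_mul, ← Finset.sum_neg_distrib]
        refine Finset.sum_congr rfl fun k _ => ?_
        rw [Finset.sum_mul, ← Finset.sum_neg_distrib]
        exact Finset.sum_congr rfl fun m _ => by rw [smul_mul_assoc, neg_smul]
end
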